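/- Let C = ⊕_{n∈ℕ} C_n be a graded coalgebra over a field, and suppose that for some n ≥ 2 there exist a, b with a + b = n, 0 ≤ a,b ≤ n−1, such that Δ_{u,v} : C_{u+v} → C_u ⊗ C_v is injective whenever u ≥ a and v ≥ b. Then the sequence 0 → C(n) → C → C[a] ⊗ C[b] given by the inclusion σ_n followed by (τ_a ⊗ τ_b)∘Δ is exact, and C(n) = C(a) ∧_C C(b). -/

import Mathlib

open TensorProduct DirectSum

universe u

variable (k : Type u) [Field k]

/-- Transport along an equality of indices. -/
def lcast (C : ℕ → Type u) [∀ n, AddCommGroup (C n)] [∀ n, Module k (C n)]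
    {m n : ℕ} (h : m = n) : C m ≃ₗ[k] C n := by
  subst h; exact LinearEquiv.refl k (C m)

/-- The canonical projection `τ_m : C → C[m] = ⊕_{i≥m} C_i`. -/
noncomputable def tailProj (C : ℕ → Type u) [∀ n, AddCommGroup (C n)] [∀ n, Module k (C n)]
    (m : ℕ) : (⨁ n, C n) →ₗ[k] ⨁ (i : {i : ℕ // m ≤ i}), C i.1 :=
  DirectSum.toModule k ℕ _
    (fun i => if h : m ≤ i then DirectSum.lof k {j : ℕ // m ≤ j} (fun j => C j.1) ⟨i, h⟩ else 0)

/-- The truncation `C(m) = ⊕_{i<m} C_i` as a submodule of `C`. -/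
noncomputable def truncSub (C : ℕ → Type u) [∀ n, AddCommGroup (C n)] [∀ n, Module k (C n)]
    (m : ℕ) : Submodule k (⨁ n, C n) :=
  ⨆ i : Fin m, LinearMap.range (DirectSum.lof k ℕ C i.1)

/-- The wedge product `X ∧_C Y = ker((p_X ⊗ p_Y) ∘ Δ)` of two subspaces. -/
noncomputable def wedge (A : Type u) [AddCommGroup A] [Module k A] [Coalgebra k A]
    (X Y : Submodule k A) : Submodule k A :=
  LinearMap.ker ((TensorProduct.map X.mkQ Y.mkQ) ∘ₗ (Coalgebra.comul : A →ₗ[k] A ⊗[k] A))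

section Aux
variable (C : ℕ → Type u) [∀ n, AddCommGroup (C n)] [∀ n, Module k (C n)]

lemma lcast_rfl (m : ℕ) (h : m = m) (c : C m) : lcast k C h c = c := rfl

lemma tailProj_lof_of_le {m i : ℕ} (h : m ≤ i) :
    (tailProj k C m) ∘ₗ DirectSum.lof k ℕ C i =
      DirectSum.lof k {j : ℕ // m ≤ j} (fun j => C j.1) ⟨i, h⟩ := by
  ext c
  simp [tailProj, DirectSum.toModule_lof, dif_pos h]

lemma tailProj_lof_of_lt {m i : ℕ} (h : ¬ m ≤ i) :
    (tailProj k C m) ∘ₗ DirectSum.lof k ℕ C i = 0 := by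
  ext c
  simp [tailProj, DirectSum.toModule_lof, dif_neg h]

lemma component_tailProj {m i : ℕ} (h : m ≤ i) :
    (DirectSum.component k {j : ℕ // m ≤ j} (fun j => C j.1) ⟨i, h⟩) ∘ₗ tailProj k C m =
      DirectSum.component k ℕ C i := by
  apply DirectSum.linearMap_ext
  intro j
  rw [LinearMap.comp_assoc]
  by_cases hj : m ≤ j
  · rw [tailProj_lof_of_le k C hj]
    by_cases hji : j = i
    · subst hji
      ext c
      simp [DirectSum.component.lof_self]
    · ext c
      rw [LinearMap.comp_apply, LinearMap.comp_apply, DirectSum.component.of,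
        DirectSum.component.of, dif_neg (by simp [Subtype.ext_iff, hji]), dif_neg hji]
  · rw [tailProj_lof_of_lt k C hj, LinearMap.comp_zero]
    ext c
    rw [LinearMap.comp_apply, DirectSum.component.of,
      dif_neg (fun hji : j = i => hj (hji ▸ h)), LinearMap.zero_apply]

lemma mem_truncSub_iff {m : ℕ} (x : ⨁ i, C i) :
    x ∈ truncSub k C m ↔ ∀ i, m ≤ i → DirectSum.component k ℕ C i x = 0 := by
  classical
  constructor
  · intro hx i hi
    have : truncSub k C m ≤ LinearMap.ker (DirectSum.component k ℕ C i) := by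
      apply iSup_le
      intro j
      rw [LinearMap.range_le_ker_iff]
      ext c
      rw [LinearMap.comp_apply, DirectSum.component.of,
        dif_neg (fun hji : j.1 = i => absurd (hji ▸ j.2) (by omega)), LinearMap.zero_apply]
    exact this hx
  · intro hx
    rw [← DirectSum.sum_support_of (x := x)]
    apply Submodule.sum_mem
    intro i hi
    have hxi : x i ≠ 0 := DFinsupp.mem_support_iff.mp hi
    have him : i < m := by
      by_contra hc
      exact hxi (hx i (by omega))
    rw [← DirectSum.lof_eq_of k]
    exact Submodule.mem_iSup_of_mem (⟨i, him⟩ : Fin m) ⟨x i, rfl⟩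

lemma ker_tailProj (m : ℕ) : LinearMap.ker (tailProj k C m) = truncSub k C m := by
  ext x
  rw [LinearMap.mem_ker, mem_truncSub_iff]
  constructor
  · intro h i hi
    rw [← component_tailProj k C (m := m) hi]
    simp [h]
  · intro h
    refine DirectSum.ext_component k (fun p => ?_)
    obtain ⟨i, hi⟩ := p
    rw [map_zero]
    have := LinearMap.congr_fun (component_tailProj k C (m := m) hi) x
    rw [LinearMap.comp_apply] at this
    rw [this, h i hi]

lemma tailProj_surjective (m : ℕ) : Function.Surjective (tailProj k C m) := by
  have hsec : (tailProj k C m) ∘ₗ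
      (DirectSum.toModule k {j : ℕ // m ≤ j} _ (fun i => DirectSum.lof k ℕ C i.1)) =
      LinearMap.id := by
    apply DirectSum.linearMap_ext
    rintro ⟨i, hi⟩
    rw [LinearMap.comp_assoc]
    ext c : 1
    simp only [LinearMap.comp_apply, DirectSum.toModule_lof, LinearMap.id_comp]
    exact LinearMap.congr_fun (tailProj_lof_of_le k C hi) c
  intro y
  exact ⟨_, LinearMap.congr_fun hsec y⟩

noncomputable def tailEquiv (m : ℕ) :
    ((⨁ i, C i) ⧸ truncSub k C m) ≃ₗ[k] ⨁ (i : {i : ℕ // m ≤ i}), C i.1 :=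
  LinearEquiv.ofBijective ((truncSub k C m).liftQ (tailProj k C m) (ker_tailProj k C m).ge)
    ⟨by
      rw [← LinearMap.ker_eq_bot]
      exact Submodule.ker_liftQ_eq_bot _ _ _ (ker_tailProj k C m).le,
     by
      intro y
      obtain ⟨x, hx⟩ := tailProj_surjective k C m y
      exact ⟨Submodule.Quotient.mk x, hx⟩⟩

lemma tailProj_eq (m : ℕ) :
    tailProj k C m = (tailEquiv k C m).toLinearMap ∘ₗ (truncSub k C m).mkQ :=
  ((truncSub k C m).liftQ_mkQ (tailProj k C m) (ker_tailProj k C m).ge).symm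

lemma comp_lof_lof {a b s t : ℕ} (hs : a ≤ s) (ht : b ≤ t) :
    (TensorProduct.directSum k k (fun i : {i : ℕ // a ≤ i} => C i.1)
        (fun j : {j : ℕ // b ≤ j} => C j.1)).toLinearMap ∘ₗ
      TensorProduct.map ((tailProj k C a) ∘ₗ DirectSum.lof k ℕ C s)
        ((tailProj k C b) ∘ₗ DirectSum.lof k ℕ C t) =
      DirectSum.lof k ({i : ℕ // a ≤ i} × {j : ℕ // b ≤ j})
        (fun p => C p.1.1 ⊗[k] C p.2.1) (⟨s, hs⟩, ⟨t, ht⟩) := by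
  rw [tailProj_lof_of_le k C hs, tailProj_lof_of_le k C ht]
  apply TensorProduct.ext'
  intro m₁ m₂
  simp

lemma term_eq_zero {a b s t u v : ℕ} (hu : a ≤ u) (hv : b ≤ v) (hne : ¬ (s = u ∧ t = v))
    (y : C s ⊗[k] C t) :
    DirectSum.component k ({i : ℕ // a ≤ i} × {j : ℕ // b ≤ j})
        (fun p => C p.1.1 ⊗[k] C p.2.1) (⟨u, hu⟩, ⟨v, hv⟩)
      (TensorProduct.directSum k k (fun i : {i : ℕ // a ≤ i} => C i.1)
          (fun j : {j : ℕ // b ≤ j} => C j.1)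
        (TensorProduct.map (tailProj k C a) (tailProj k C b)
          (TensorProduct.map (DirectSum.lof k ℕ C s) (DirectSum.lof k ℕ C t) y))) = 0 := by
  have h1 : TensorProduct.map (tailProj k C a) (tailProj k C b)
      (TensorProduct.map (DirectSum.lof k ℕ C s) (DirectSum.lof k ℕ C t) y) =
      TensorProduct.map ((tailProj k C a) ∘ₗ DirectSum.lof k ℕ C s)
        ((tailProj k C b) ∘ₗ DirectSum.lof k ℕ C t) y := by
    rw [TensorProduct.map_comp]; rfl
  rw [h1]
  by_cases hs : a ≤ s
  · by_cases ht : b ≤ t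
    · have h2 := LinearMap.congr_fun (comp_lof_lof k C hs ht) y
      simp only [LinearMap.comp_apply, LinearEquiv.coe_coe] at h2
      rw [h2, DirectSum.component.of, dif_neg]
      intro hc
      rw [Prod.ext_iff, Subtype.ext_iff, Subtype.ext_iff] at hc
      exact hne hc
    · rw [tailProj_lof_of_lt k C ht, TensorProduct.map_zero_right, LinearMap.zero_apply,
        map_zero, map_zero]
  · rw [tailProj_lof_of_lt k C hs, TensorProduct.map_zero_left, LinearMap.zero_apply,
      map_zero, map_zero]

lemma term_eq {a b u v : ℕ} (hu : a ≤ u) (hv : b ≤ v) (y : C u ⊗[k] C v) :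
    DirectSum.component k ({i : ℕ // a ≤ i} × {j : ℕ // b ≤ j})
        (fun p => C p.1.1 ⊗[k] C p.2.1) (⟨u, hu⟩, ⟨v, hv⟩)
      (TensorProduct.directSum k k (fun i : {i : ℕ // a ≤ i} => C i.1)
          (fun j : {j : ℕ // b ≤ j} => C j.1)
        (TensorProduct.map (tailProj k C a) (tailProj k C b)
          (TensorProduct.map (DirectSum.lof k ℕ C u) (DirectSum.lof k ℕ C v) y))) = y := by
  have h1 : TensorProduct.map (tailProj k C a) (tailProj k C b)
      (TensorProduct.map (DirectSum.lof k ℕ C u) (DirectSum.lof k ℕ C v) y) =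
      TensorProduct.map ((tailProj k C a) ∘ₗ DirectSum.lof k ℕ C u)
        ((tailProj k C b) ∘ₗ DirectSum.lof k ℕ C v) y := by
    rw [TensorProduct.map_comp]; rfl
  rw [h1]
  have h2 := LinearMap.congr_fun (comp_lof_lof k C hu hv) y
  simp only [LinearMap.comp_apply, LinearEquiv.coe_coe] at h2
  rw [h2, DirectSum.component.lof_self]

set_option synthInstance.maxHeartbeats 1000000 in
set_option maxHeartbeats 1000000 in
lemma key [Coalgebra k (⨁ n, C n)]
    (Δab : ∀ a b : ℕ, C (a + b) →ₗ[k] C a ⊗[k] C b)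
    (hgr : ∀ n : ℕ, Coalgebra.comul ∘ₗ DirectSum.lof k ℕ C n =
      ∑ p ∈ (Finset.HasAntidiagonal.antidiagonal n).attach,
        (TensorProduct.map (DirectSum.lof k ℕ C p.1.1) (DirectSum.lof k ℕ C p.1.2)) ∘ₗ
          Δab p.1.1 p.1.2 ∘ₗ
            (lcast k C (Finset.HasAntidiagonal.mem_antidiagonal.mp p.2).symm).toLinearMap)
    (a b u v : ℕ) (hu : a ≤ u) (hv : b ≤ v) (x : ⨁ m, C m) :
    DirectSum.component k ({i : ℕ // a ≤ i} × {j : ℕ // b ≤ j})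
        (fun p => C p.1.1 ⊗[k] C p.2.1) (⟨u, hu⟩, ⟨v, hv⟩)
      (TensorProduct.directSum k k (fun i : {i : ℕ // a ≤ i} => C i.1)
          (fun j : {j : ℕ // b ≤ j} => C j.1)
        ((TensorProduct.map (tailProj k C a) (tailProj k C b)) (Coalgebra.comul x))) =
      Δab u v (DirectSum.component k ℕ C (u + v) x) := by
  have heq :
      (DirectSum.component k ({i : ℕ // a ≤ i} × {j : ℕ // b ≤ j})
          (fun p => C p.1.1 ⊗[k] C p.2.1) (⟨u, hu⟩, ⟨v, hv⟩)) ∘ₗ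
        (TensorProduct.directSum k k (fun i : {i : ℕ // a ≤ i} => C i.1)
            (fun j : {j : ℕ // b ≤ j} => C j.1)).toLinearMap ∘ₗ
          (TensorProduct.map (tailProj k C a) (tailProj k C b)) ∘ₗ
            (Coalgebra.comul : (⨁ m, C m) →ₗ[k] (⨁ m, C m) ⊗[k] (⨁ m, C m)) =
      (Δab u v) ∘ₗ (DirectSum.component k ℕ C (u + v)) := by
    apply DirectSum.linearMap_ext k
    intro i
    ext c
    simp only [LinearMap.comp_apply, LinearEquiv.coe_coe]
    have hc := LinearMap.congr_fun (hgr i) c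
    rw [LinearMap.comp_apply] at hc
    rw [hc, LinearMap.sum_apply, map_sum, map_sum, map_sum]
    by_cases hi : u + v = i
    · subst hi
      rw [DirectSum.component.lof_self]
      have hmem : ((u, v) : ℕ × ℕ) ∈ Finset.HasAntidiagonal.antidiagonal (u + v) :=
        Finset.HasAntidiagonal.mem_antidiagonal.mpr rfl
      rw [Finset.sum_eq_single_of_mem (⟨(u, v), hmem⟩ : {p // p ∈ Finset.HasAntidiagonal.antidiagonal (u + v)})
        (Finset.mem_attach _ _)]
      · simp only [LinearMap.comp_apply, LinearEquiv.coe_coe]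
        rw [lcast_rfl]
        exact term_eq k C hu hv _
      · rintro ⟨⟨s, t⟩, hmem'⟩ _ hne
        simp only [LinearMap.comp_apply, LinearEquiv.coe_coe]
        apply term_eq_zero k C hu hv
        rintro ⟨rfl, rfl⟩
        exact hne rfl
    · rw [DirectSum.component.of, dif_neg (fun h => hi h.symm), map_zero]
      apply Finset.sum_eq_zero
      rintro ⟨⟨s, t⟩, hmem'⟩ _
      simp only [LinearMap.comp_apply, LinearEquiv.coe_coe]
      apply term_eq_zero k C hu hv
      rintro ⟨rfl, rfl⟩
      exact hi (Finset.HasAntidiagonal.mem_antidiagonal.mp hmem')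
  have := LinearMap.congr_fun heq x
  simpa using this
end Aux

/-- Let `C = ⊕ C_n` be a graded coalgebra over a field and suppose, for some
`n ≥ 2`, there are `a, b` with `a + b = n`, `a, b ≤ n - 1`, such that `Δ_{u,v}` is injective
whenever `u ≥ a` and `v ≥ b`. Then `0 → C(n) → C → C[a] ⊗ C[b]` (via `σ_n` and
`(τ_a ⊗ τ_b) ∘ Δ`) is exact, and `C(n) = C(a) ∧_C C(b)`. -/
theorem stmt9 (C : ℕ → Type u) [∀ n, AddCommGroup (C n)] [∀ n, Module k (C n)]
    [Coalgebra k (⨁ n, C n)]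
    (Δab : ∀ a b : ℕ, C (a + b) →ₗ[k] C a ⊗[k] C b)
    (hgr : ∀ n : ℕ, Coalgebra.comul ∘ₗ DirectSum.lof k ℕ C n =
      ∑ p ∈ (Finset.HasAntidiagonal.antidiagonal n).attach,
        (TensorProduct.map (DirectSum.lof k ℕ C p.1.1) (DirectSum.lof k ℕ C p.1.2)) ∘ₗ
          Δab p.1.1 p.1.2 ∘ₗ
            (lcast k C (Finset.HasAntidiagonal.mem_antidiagonal.mp p.2).symm).toLinearMap)
    (n a b : ℕ) (hn : 2 ≤ n) (hab : a + b = n) (ha : a ≤ n - 1) (hb : b ≤ n - 1)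
    (hinj : ∀ u v : ℕ, a ≤ u → b ≤ v → Function.Injective (Δab u v)) :
    LinearMap.ker
        ((TensorProduct.map (tailProj k C a) (tailProj k C b)) ∘ₗ
          (Coalgebra.comul : (⨁ m, C m) →ₗ[k] (⨁ m, C m) ⊗[k] (⨁ m, C m))) =
      truncSub k C n ∧
    truncSub k C n = wedge k (⨁ m, C m) (truncSub k C a) (truncSub k C b) := by
  classical
  have hbn : b ≤ n := by omega
  have part1 : LinearMap.ker
        ((TensorProduct.map (tailProj k C a) (tailProj k C b)) ∘ₗ
          (Coalgebra.comul : (⨁ m, C m) →ₗ[k] (⨁ m, C m) ⊗[k] (⨁ m, C m))) =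
      truncSub k C n := by
    ext x
    rw [LinearMap.mem_ker, LinearMap.comp_apply, mem_truncSub_iff]
    constructor
    · intro hx i hi
      have hbi : b ≤ i := le_trans hbn hi
      have hu : a ≤ i - b := by omega
      have huv : (i - b) + b = i := by omega
      have hcomp := key k C Δab hgr a b (i - b) b hu le_rfl x
      rw [hx, map_zero, map_zero] at hcomp
      have h0 := hinj (i - b) b hu le_rfl
        (hcomp.symm.trans (map_zero (Δab (i - b) b)).symm)
      rw [← huv]
      exact h0
    · intro hx
      have he : (TensorProduct.directSum k k (fun i : {i : ℕ // a ≤ i} => C i.1)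
          (fun j : {j : ℕ // b ≤ j} => C j.1))
          ((TensorProduct.map (tailProj k C a) (tailProj k C b)) (Coalgebra.comul x)) = 0 := by
        refine DirectSum.ext_component k (fun p => ?_)
        obtain ⟨⟨uu, huu⟩, ⟨vv, hvv⟩⟩ := p
        rw [map_zero, key k C Δab hgr a b uu vv huu hvv x, hx (uu + vv) (by omega), map_zero]
      exact (LinearEquiv.map_eq_zero_iff _).mp he
  refine ⟨part1, ?_⟩
  rw [← part1]
  ext x
  simp only [wedge, LinearMap.mem_ker, LinearMap.comp_apply]
  rw [tailProj_eq k C a, tailProj_eq k C b, TensorProduct.map_comp, LinearMap.comp_apply]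
  exact LinearEquiv.map_eq_zero_iff (TensorProduct.congr (tailEquiv k C a) (tailEquiv k C b))
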